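/- The 4-dimensional algebra T⁴₄₄ over ℂ with basis e₁,e₂,e₃,e₄ and nonzero products e₁e₁ = e₂, e₂e₁ = e₃, e₂e₃ = e₄ is a nilpotent terminal algebra whose annihilator is spanned by e₄, and it is not a left Leibniz algebra. -/

import Mathlib

def kbr1 {V : Type*} [AddCommGroup V] (A : V → V) (B : V → V → V) : V → V → V :=
  fun x y => A (B x y) - B (A x) y - B x (A y)

def kbr2 {V : Type*} [AddCommGroup V] (B C : V → V → V) : V → V → V → V :=
  fun x y z => B (C x y) z + B x (C y z) + B y (C x z)
    - C (B x y) z - C x (B y z) - C y (B x z)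

def IsTerminal {V : Type*} [AddCommGroup V] (P : V → V → V) : Prop :=
  ∀ a x y z, kbr2 (kbr1 (fun w => P a w) P) P x y z = 0

def LeftLeibniz {V : Type*} [AddCommGroup V] (P : V → V → V) : Prop :=
  ∀ a x y, P a (P x y) = P (P a x) y + P x (P a y)

/-- `IsProd mul n v` : `v` is a product of `n` elements of the algebra, under some bracketing. -/
inductive IsProd {V : Type*} (mul : V → V → V) : ℕ → V → Prop
  | single : ∀ v : V, IsProd mul 1 v
  | mul : ∀ {m n : ℕ} {x y : V}, IsProd mul m x → IsProd mul n y → IsProd mul (m + n) (mul x y)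

/-- An algebra is nilpotent if all sufficiently long products vanish. -/
def IsNilpotentAlg {V : Type*} [AddCommGroup V] (mul : V → V → V) : Prop :=
  ∃ N : ℕ, ∀ n ≥ N, ∀ v : V, IsProd mul n v → v = 0

/-- T⁴₄₄: basis `e₁,e₂,e₃,e₄`, nonzero products `e₁e₁ = e₂`, `e₂e₁ = e₃`, `e₂e₃ = e₄`. -/
def mulT444 (x y : Fin 4 → ℂ) : Fin 4 → ℂ :=
  (x 0 * y 0) • (Pi.single 1 1 : Fin 4 → ℂ) + (x 1 * y 0) • (Pi.single 2 1 : Fin 4 → ℂ)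
    + (x 1 * y 2) • (Pi.single 3 1 : Fin 4 → ℂ)


lemma IsProd.one_le {V : Type*} {mul : V → V → V} {m : ℕ} {v : V} (h : IsProd mul m v) :
    1 ≤ m := by
  induction h with
  | single => rfl
  | mul => omega

lemma Submodule.mem_span_pi_single_one_iff {R ι : Type*} [Semiring R] [DecidableEq ι]
    (x : ι → R) (i : ι) : x ∈ span R {Pi.single i 1} ↔ ∀ j ≠ i, x j = 0 := by
  rw [mem_span_singleton]
  constructor
  · rintro ⟨c, rfl⟩ j hj
    simp [hj]
  · intro h
    refine ⟨x i, funext fun j => ?_⟩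
    by_cases hj : j = i
    · subst hj
      simp
    · simp [hj, h j hj]

namespace T444

lemma mulT444_eq (x y : Fin 4 → ℂ) : mulT444 x y = ![0, x 0 * y 0, x 1 * y 0, x 1 * y 2] := by
  ext i
  fin_cases i <;> simp [mulT444]

lemma isTerminal : IsTerminal mulT444 := by
  intro a x y z
  ext i
  fin_cases i <;> simp [kbr1, kbr2, mulT444_eq]
  ring

/-- Weights of `e₁, e₂, e₃, e₄` making the product graded (`e₄ = e₂e₃` has weight `2 + 3`), so a
product of `m` factors has no component of weight below `m`. -/
def weight : Fin 4 → ℕ := ![1, 2, 3, 5]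

lemma apply_eq_zero_of_isProd_of_weight_lt {m : ℕ} {v : Fin 4 → ℂ} (h : IsProd mulT444 m v)
    {i : Fin 4} (hi : weight i < m) : v i = 0 := by
  induction h generalizing i with
  | single => fin_cases i <;> simp [weight] at hi
  | @mul m n x y hx hy ihx ihy =>
    have hm := hx.one_le
    have hn := hy.one_le
    fin_cases i <;> simp [weight, mulT444_eq] at hi ⊢
    · rcases (by omega : 1 < m ∨ 1 < n) with h | h
      · exact .inl (ihx (i := 0) h)
      · exact .inr (ihy (i := 0) h)
    · rcases (by omega : 2 < m ∨ 1 < n) with h | h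
      · exact .inl (ihx (i := 1) h)
      · exact .inr (ihy (i := 0) h)
    · rcases (by omega : 2 < m ∨ 3 < n) with h | h
      · exact .inl (ihx (i := 1) h)
      · exact .inr (ihy (i := 2) h)

lemma isNilpotentAlg : IsNilpotentAlg mulT444 :=
  ⟨6, fun _ hn _ hv => funext fun i =>
    apply_eq_zero_of_isProd_of_weight_lt hv (by fin_cases i <;> simp [weight] <;> omega)⟩

lemma forall_mul_eq_zero_iff (x : Fin 4 → ℂ) :
    (∀ y, mulT444 x y = 0 ∧ mulT444 y x = 0) ↔ ∀ j ≠ 3, x j = 0 := by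
  constructor
  · intro h j hj
    have h₁ := congrFun (h (Pi.single 0 1)).1
    have h₂ := congrFun (h (Pi.single 1 1)).2 3
    fin_cases j
    · simpa [mulT444_eq] using h₁ 1
    · simpa [mulT444_eq] using h₁ 2
    · simpa [mulT444_eq] using h₂
    · exact absurd rfl hj
  · intro h y
    simp [mulT444_eq, h 0, h 1, h 2]

-- `e₁(e₁e₁) = e₁e₂ = 0`, whereas `(e₁e₁)e₁ + e₁(e₁e₁) = e₃`.
lemma not_leftLeibniz : ¬ LeftLeibniz mulT444 := fun h => by
  simpa [mulT444_eq] using congrFun (h (Pi.single 0 1) (Pi.single 0 1) (Pi.single 0 1)) 2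

end T444

/-- T⁴₄₄ is a nilpotent terminal algebra with annihilator spanned by `e₄`,
and it is not left Leibniz. -/
theorem stmt16 :
    IsTerminal mulT444 ∧ IsNilpotentAlg mulT444 ∧
    {x : Fin 4 → ℂ | ∀ y, mulT444 x y = 0 ∧ mulT444 y x = 0}
      = (Submodule.span ℂ {(Pi.single 3 1 : Fin 4 → ℂ)} : Submodule ℂ (Fin 4 → ℂ)) ∧
    ¬ LeftLeibniz mulT444 := by
  refine ⟨T444.isTerminal, T444.isNilpotentAlg, ?_, T444.not_leftLeibniz⟩
  ext x
  simp only [Set.mem_ofPred_eq, SetLike.mem_coe, Submodule.mem_span_pi_single_one_iff,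
    T444.forall_mul_eq_zero_iff]
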